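/- For every integer m ≥ 8, the graph G_m is 2m-consecutive-colored: every edge of color i < 2m is adjacent to exactly one edge of color i+1, and every edge of color i > 1 is adjacent to exactly one edge of color i−1. -/

import Mathlib

/-- A vertex of the disjoint union of the `4m+2` copies of `L_{2m}`:
`(k, i)` is the vertex `v_i` of the copy `L^k`, with `1 ≤ k ≤ 4m+2` and
`0 ≤ i ≤ 2m`. -/
def VOk (m : ℕ) (p : ℕ × ℕ) : Prop :=
  1 ≤ p.1 ∧ p.1 ≤ 4 * m + 2 ∧ p.2 ≤ 2 * m

/-- Vertices of the disjoint union of the copies `L¹, …, L^{4m+2}` of `L_{2m}`. -/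
def Vm (m : ℕ) := { p : ℕ × ℕ // VOk m p }

/-- The identifications I1–I6 defining `G_m`. -/
def glueRel (m : ℕ) : Vm m → Vm m → Prop := fun x y =>
  (∃ t, 1 ≤ t ∧ t + 1 ≤ m ∧ x.1 = (t, t - 1) ∧ y.1 = (t + 1, t + 2)) ∨
  (∃ t, m + 1 ≤ t ∧ t + 1 ≤ 2 * m ∧ x.1 = (t, t - 2) ∧ y.1 = (t + 1, t + 1)) ∨
  (x.1 = (1, 2) ∧ y.1 = (2 * m, 2 * m - 2)) ∨
  (∃ t, 1 ≤ t ∧ t ≤ m ∧ x.1 = (t, t) ∧ y.1 = (2 * m + t, 2 * m - 5)) ∨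
  (∃ t, m + 1 ≤ t ∧ t ≤ 2 * m ∧ x.1 = (t, t - 1) ∧ y.1 = (2 * m + t, 5)) ∨
  (x.1 = (1, 0) ∧ y.1 = (4 * m + 1, 6)) ∨
  (x.1 = (4 * m + 2, 2 * m - 6) ∧ y.1 = (2 * m, 2 * m))

/-- The vertex set of `G_m`: the quotient of the disjoint union of the copies
of `L_{2m}` by the identifications I1–I6. -/
def Qm (m : ℕ) := Quot (glueRel m)

/-- Projection to the quotient. -/
def mkQ (m : ℕ) : Vm m → Qm m := Quot.mk (glueRel m)

/-- `x` and `y` are the endpoints of an edge of one of the copies of `L_{2m}`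
(`y` is the upper endpoint). -/
def EdgeV (m : ℕ) (x y : Vm m) : Prop :=
  x.1.1 = y.1.1 ∧ x.1.2 + 1 = y.1.2

/-- The graph `G_m`. -/
def Gm (m : ℕ) : SimpleGraph (Qm m) where
  Adj q q' := q ≠ q' ∧
    ∃ x y : Vm m, (EdgeV m x y ∨ EdgeV m y x) ∧ q = mkQ m x ∧ q' = mkQ m y
  symm := by
    constructor
    rintro q q' ⟨h, x, y, he, hx, hy⟩
    exact ⟨h.symm, y, x, by tauto, hy, hx⟩
  loopless := by constructor; rintro q ⟨h, -⟩; exact h rfl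


/-- `x` is incident to an edge of color `c` in its copy of `L_{2m}`:
the edge of color `c` of a copy joins the vertices `v_{c-1}` and `v_c`. -/
def Inc (m : ℕ) (x : Vm m) (c : ℕ) : Prop :=
  (c = x.1.2 ∧ 1 ≤ c) ∨ (c = x.1.2 + 1 ∧ c ≤ 2 * m)

/-- `(k, c)` is an edge of `G_m`: the edge of color `c` of the copy `L^k`. -/
def EdgeOk (m k c : ℕ) : Prop :=
  1 ≤ k ∧ k ≤ 4 * m + 2 ∧ 1 ≤ c ∧ c ≤ 2 * m

/-- The edges `(k, c)` and `(k', c')` of `G_m` are adjacent: they share a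
vertex of the quotient `G_m`. -/
def EAdj (m k c k' c' : ℕ) : Prop :=
  ∃ x y : Vm m, x.1.1 = k ∧ Inc m x c ∧ y.1.1 = k' ∧ Inc m y c' ∧
    mkQ m x = mkQ m y

/-!
Every vertex of the disjoint union has a canonical representative of its class in `G_m`, and
two distinct vertices with the same representative have indices at least 3 apart. An edge of
color `c` and an edge of color `c ± 1` have endpoints whose indices differ by at most 2, so
they can share a vertex of `G_m` only inside one copy of `L_{2m}`, where the edge of color
`c ± 1` next to a given edge is unique.
-/

/-- The canonical representative of the class of a vertex of the disjoint union in `G_m`: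
the upper vertex of an identification is sent to the lower one. The two classes with three
members, `{(1,0), (2,3), (4m+1,6)}` and `{(2m-1,2m-3), (2m,2m), (4m+2,2m-6)}`, are sent to
`(1,0)` and `(2m-1,2m-3)`. -/
def glueRep (m : ℕ) (p : ℕ × ℕ) : ℕ × ℕ :=
  if 2 ≤ p.1 ∧ p.1 ≤ m ∧ p.2 = p.1 + 1 then (p.1 - 1, p.1 - 2)
  else if m + 2 ≤ p.1 ∧ p.1 ≤ 2 * m ∧ p.2 = p.1 then (p.1 - 1, p.1 - 3)
  else if p.1 = 2 * m ∧ p.2 + 2 = 2 * m then (1, 2)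
  else if 2 * m + 1 ≤ p.1 ∧ p.1 ≤ 3 * m ∧ p.2 + 5 = 2 * m then (p.1 - 2 * m, p.1 - 2 * m)
  else if 3 * m + 1 ≤ p.1 ∧ p.1 ≤ 4 * m ∧ p.2 = 5 then (p.1 - 2 * m, p.1 - 2 * m - 1)
  else if p.1 = 4 * m + 1 ∧ p.2 = 6 then (1, 0)
  else if p.1 = 4 * m + 2 ∧ p.2 + 6 = 2 * m then (2 * m - 1, 2 * m - 3)
  else p

section

variable {m : ℕ}

theorem glueRep_eq_of_glueRel (hm : 8 ≤ m) {x y : Vm m} (h : glueRel m x y) :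
    glueRep m x.1 = glueRep m y.1 := by
  obtain ⟨⟨x1, x2⟩, _⟩ := x
  obtain ⟨⟨y1, y2⟩, _⟩ := y
  simp only [glueRel, Prod.mk.injEq] at h
  unfold glueRep
  rcases h with ⟨t, ht, ht', ⟨rfl, rfl⟩, rfl, rfl⟩ | ⟨t, ht, ht', ⟨rfl, rfl⟩, rfl, rfl⟩ |
      ⟨⟨rfl, rfl⟩, rfl, rfl⟩ | ⟨t, ht, ht', ⟨rfl, rfl⟩, rfl, rfl⟩ | ⟨t, ht, ht', ⟨rfl, rfl⟩, rfl, rfl⟩ |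
      ⟨⟨rfl, rfl⟩, rfl, rfl⟩ | ⟨⟨rfl, rfl⟩, rfl, rfl⟩ <;>
    simp (disch := omega) only [if_pos, if_neg, and_true, true_and, ite_true,
      Prod.mk.injEq] <;> omega

set_option maxHeartbeats 600000 in
theorem eq_or_index_gap_of_glueRep_eq (hm : 8 ≤ m) {p q : ℕ × ℕ}
    (h : glueRep m p = glueRep m q) : p = q ∨ p.2 + 3 ≤ q.2 ∨ q.2 + 3 ≤ p.2 := by
  obtain ⟨k, i⟩ := p
  obtain ⟨k', i'⟩ := q
  generalize hr : glueRep m (k', i') = r at h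
  unfold glueRep at h hr
  split_ifs at h <;> split_ifs at hr <;> subst h <;> simp only [Prod.mk.injEq] at hr ⊢ <;> omega

theorem eq_or_index_gap_of_mkQ_eq (hm : 8 ≤ m) {x y : Vm m} (h : mkQ m x = mkQ m y) :
    x.1 = y.1 ∨ x.1.2 + 3 ≤ y.1.2 ∨ y.1.2 + 3 ≤ x.1.2 :=
  eq_or_index_gap_of_glueRep_eq hm <|
    congrArg (Quot.lift (fun v : Vm m => glueRep m v.1) fun _ _ => glueRep_eq_of_glueRel hm) h

theorem EAdj.copy_eq (hm : 8 ≤ m) {k c k' c' : ℕ} (h : EAdj m k c k' c') (hc : c' ≤ c + 1)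
    (hc' : c ≤ c' + 1) : k = k' := by
  obtain ⟨x, y, rfl, hx, rfl, hy, hxy⟩ := h
  rcases eq_or_index_gap_of_mkQ_eq hm hxy with hxy | hgap
  · rw [hxy]
  · unfold Inc at hx hy
    omega

end

/-- for `m ≥ 8` the graph `G_m` is `2m`-consecutive-colored:
every edge of color `c < 2m` is adjacent to exactly one edge of color `c+1`,
and every edge of color `c > 1` is adjacent to exactly one edge of color
`c−1`. -/
theorem statement11 (m : ℕ) (hm : 8 ≤ m) (k c : ℕ) (hE : EdgeOk m k c) :
    (c < 2 * m →
      ∃! p : ℕ × ℕ, EdgeOk m p.1 p.2 ∧ p.2 = c + 1 ∧ EAdj m k c p.1 p.2) ∧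
    (1 < c →
      ∃! p : ℕ × ℕ, EdgeOk m p.1 p.2 ∧ p.2 + 1 = c ∧ EAdj m k c p.1 p.2) := by
  obtain ⟨hk, hk', hc, hc'⟩ := hE
  constructor
  · intro hlt
    refine ⟨(k, c + 1), ⟨⟨hk, hk', by omega, hlt⟩, rfl, ?_⟩, ?_⟩
    · let v : Vm m := ⟨(k, c), hk, hk', hc'⟩
      exact ⟨v, v, rfl, .inl ⟨rfl, hc⟩, rfl, .inr ⟨rfl, hlt⟩, rfl⟩
    · rintro ⟨k', _⟩ ⟨-, rfl, h⟩
      rw [h.copy_eq hm (by omega) (by omega)]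
  · intro hgt
    refine ⟨(k, c - 1), ⟨⟨hk, hk', by omega, by omega⟩, by omega, ?_⟩, ?_⟩
    · let v : Vm m := ⟨(k, c - 1), hk, hk', by omega⟩
      exact ⟨v, v, rfl, .inr ⟨(Nat.sub_add_cancel hc).symm, hc'⟩, rfl, .inl ⟨rfl, by omega⟩, rfl⟩
    · rintro ⟨k', c'⟩ ⟨-, hc'c, h⟩
      obtain rfl := h.copy_eq hm (by omega) (by omega)
      simp only [← hc'c, Nat.add_sub_cancel]
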